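/- arXiv:2508.17022 — 9 statements merged into one kernel-verified Lean document; each statement's English description precedes it below -/
import Mathlib

section
/- Let S = ⟨n, n+1, ..., n+t⟩ be the numerical semigroup generated by the consecutive integers n, n+1, ..., n+t with 1 ≤ t < n. Then the Apéry set of n in S is Ap(S,n) = {λn + (λ-1)t + r : 1 ≤ r ≤ t, λ ∈ ℕ, 0 ≤ (λ-1)t + r < n}. -/
/-!
A sum of `l` generators of `S = ⟨n, n+1, …, n+t⟩` lies in `[l n, l (n + t)]`, and every integer
of that interval is such a sum (greedily peel off generators), so `S` is the union of these
intervals. Hence `x = l n + j` with `0 ≤ j ≤ l t` lies in `Ap(S, n)` exactly when `x - n` misses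
the intervals of indices `l - 1` and `l`, that is, when `(l - 1) t < j < n`; writing
`j = (l - 1) t + r` gives the formula, `l = 0` accounting for `0`.
-/

open Finset

def consecutiveSemigroup (n t : ℕ) : Set ℕ :=
  {x | ∃ c : Fin (t + 1) → ℕ, x = ∑ i, c i * (n + i)}

def apery (S : Set ℕ) (n : ℕ) : Set ℕ := {s ∈ S | ¬(n ≤ s ∧ s - n ∈ S)}

namespace consecutiveSemigroup

variable {n t x : ℕ}

theorem zero_mem : 0 ∈ consecutiveSemigroup n t := ⟨0, by simp⟩

theorem add_generator_mem (hx : x ∈ consecutiveSemigroup n t) {i : ℕ} (hi : i ≤ t) :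
    x + (n + i) ∈ consecutiveSemigroup n t := by
  obtain ⟨c, rfl⟩ := hx
  refine ⟨c + Pi.single ⟨i, Nat.lt_succ_of_le hi⟩ 1, ?_⟩
  simp [add_mul, sum_add_distrib, Pi.single_apply, ite_mul]

theorem exists_mul_le_of_mem (hx : x ∈ consecutiveSemigroup n t) :
    ∃ l, l * n ≤ x ∧ x ≤ l * (n + t) := by
  obtain ⟨c, rfl⟩ := hx
  refine ⟨∑ i, c i, ?_, ?_⟩
  · rw [sum_mul]
    exact sum_le_sum fun i _ => Nat.mul_le_mul_left _ (Nat.le_add_right _ _)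
  · rw [sum_mul]
    exact sum_le_sum fun i _ => Nat.mul_le_mul_left _ (by omega)

theorem mem_of_mul_le {l : ℕ} (h₁ : l * n ≤ x) (h₂ : x ≤ l * (n + t)) :
    x ∈ consecutiveSemigroup n t := by
  induction l generalizing x with
  | zero =>
    obtain rfl : x = 0 := by simpa using h₂
    exact zero_mem
  | succ l ih =>
    -- peel off the generator `n + i` with `i` as large as possible
    set i := min t (x - (l + 1) * n) with hi
    have e₁ : (l + 1) * n = l * n + n := by ring
    have e₂ : (l + 1) * (n + t) = l * n + l * t + n + t := by ring
    have e₃ : l * (n + t) = l * n + l * t := by ring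
    have hx : x - (n + i) + (n + i) = x := by omega
    rw [← hx]
    exact add_generator_mem (ih (by omega) (by omega)) (min_le_left _ _)

theorem mem_iff : x ∈ consecutiveSemigroup n t ↔ ∃ l, l * n ≤ x ∧ x ≤ l * (n + t) :=
  ⟨exists_mul_le_of_mem, fun ⟨_, h₁, h₂⟩ => mem_of_mul_le h₁ h₂⟩

theorem mem_apery_iff :
    x ∈ apery (consecutiveSemigroup n t) n ↔
      (x = 0 ∧ 0 < n) ∨ ∃ m r, 1 ≤ r ∧ r ≤ t ∧ m * t + r < n ∧ x = (m + 1) * n + m * t + r := by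
  constructor
  · rintro ⟨hx, hxn⟩
    obtain ⟨l, h₁, h₂⟩ := mem_iff.1 hx
    cases l with
    | zero =>
      obtain rfl : x = 0 := by simpa using h₂
      refine .inl ⟨rfl, Nat.pos_of_ne_zero fun hn => hxn ⟨hn.le, ?_⟩⟩
      rw [Nat.zero_sub]
      exact zero_mem
    | succ m =>
      have hout : ∀ k, ¬(k * n ≤ x - n ∧ x - n ≤ k * (n + t)) := fun k hk =>
        hxn ⟨le_trans (Nat.le_mul_of_pos_left n m.succ_pos) h₁, mem_iff.2 ⟨k, hk⟩⟩
      have hbelow := hout m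
      have habove := hout (m + 1)
      have e₁ : (m + 1) * n = m * n + n := by ring
      have e₂ : (m + 1) * (n + t) = m * n + m * t + n + t := by ring
      have e₃ : m * (n + t) = m * n + m * t := by ring
      exact .inr ⟨m, x - (m + 1) * n - m * t, by omega, by omega, by omega, by omega⟩
  · rintro (⟨rfl, hn⟩ | ⟨m, r, hr₁, hrt, hrn, rfl⟩)
    · exact ⟨zero_mem, fun h => by omega⟩
    have e₁ : (m + 1) * n = m * n + n := by ring
    have e₂ : (m + 1) * (n + t) = m * n + m * t + n + t := by ring
    refine ⟨mem_iff.2 ⟨m + 1, by omega, by omega⟩, ?_⟩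
    rintro ⟨-, hk⟩
    obtain ⟨k, hk₁, hk₂⟩ := mem_iff.1 hk
    rcases le_or_gt k m with hkm | hkm
    · have := Nat.mul_le_mul_right (n + t) hkm
      have e₃ : m * (n + t) = m * n + m * t := by ring
      omega
    · have : (m + 1) * n ≤ k * n := Nat.mul_le_mul_right n hkm
      omega

end consecutiveSemigroup

theorem stmt_2_general (n t : ℕ) (ht1 : 1 ≤ t)
    (S : Set ℕ)
    (hS : S = {x : ℕ | ∃ c : Fin (t + 1) → ℕ, x = ∑ i, c i * (n + i)}) :
    {s ∈ S | ¬(n ≤ s ∧ s - n ∈ S)} =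
      {x : ℕ | ∃ r lam : ℕ, 1 ≤ r ∧ r ≤ t ∧
        0 ≤ ((lam : ℤ) - 1) * t + r ∧ ((lam : ℤ) - 1) * t + r < n ∧
        (x : ℤ) = lam * n + ((lam : ℤ) - 1) * t + r} := by
  subst hS
  ext x
  change x ∈ apery (consecutiveSemigroup n t) n ↔ _
  rw [consecutiveSemigroup.mem_apery_iff]
  constructor
  · rintro (⟨rfl, hn⟩ | ⟨m, r, hr₁, hrt, hrn, rfl⟩)
    · exact ⟨t, 0, ht1, le_rfl, by simp, by simpa using hn, by simp⟩
    · refine ⟨r, m + 1, hr₁, hrt, ?_, ?_, ?_⟩ <;> push_cast <;> simp only [add_sub_cancel_right]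
      · positivity
      · exact_mod_cast hrn
  · rintro ⟨r, lam, hr₁, hrt, h₀, hn, hx⟩
    cases lam with
    | zero =>
      push_cast at h₀ hn hx
      exact .inl ⟨by omega, by omega⟩
    | succ m =>
      push_cast at hn hx
      simp only [add_sub_cancel_right] at hn hx
      exact .inr ⟨m, r, hr₁, hrt, by exact_mod_cast hn, by exact_mod_cast hx⟩

/-- For `S = ⟨n, n+1, …, n+t⟩` with `1 ≤ t < n`, the Apéry set of `n` in `S` is
`{λn + (λ-1)t + r : 1 ≤ r ≤ t, λ ∈ ℕ, 0 ≤ (λ-1)t + r < n}`. -/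
theorem stmt_2 (n t : ℕ) (ht1 : 1 ≤ t) (htn : t < n)
    (S : Set ℕ)
    (hS : S = {x : ℕ | ∃ c : Fin (t + 1) → ℕ, x = ∑ i, c i * (n + i)}) :
    {s ∈ S | ¬(n ≤ s ∧ s - n ∈ S)} =
      {x : ℕ | ∃ r lam : ℕ, 1 ≤ r ∧ r ≤ t ∧
        0 ≤ ((lam : ℤ) - 1) * t + r ∧ ((lam : ℤ) - 1) * t + r < n ∧
        (x : ℤ) = lam * n + ((lam : ℤ) - 1) * t + r} :=
  stmt_2_general n t ht1 S hS
end

section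
/- Let S = ⟨n, n+1, ..., n+t⟩ with 1 ≤ t < n. Then the Apéry set of n in S equals {⌈k/t⌉·n + k : 0 ≤ k ≤ n-1}. Equivalently, the least element of S congruent to k modulo n is w(k) = ⌈k/t⌉·n + k for each 0 ≤ k ≤ n-1. -/
/-!
An element of `⟨n, n+1, …, n+t⟩` that is a sum of `m` generators lies in `[m n, m (n+t)]`, and
every integer of that interval is such a sum. Writing `x = q n + k` with `k < n`, this means
`x ∈ S` exactly when `k ≤ q t`, i.e. `⌈k/t⌉ ≤ q`. So the elements of `S` congruent to `k` are
`q n + k` for `q ≥ ⌈k/t⌉`, the least one is `⌈k/t⌉ n + k`, and it is the only one whose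
predecessor `x - n` drops out of `S`.
-/

open Finset

def intervalSemigroup (n t : ℕ) : Set ℕ :=
  {x | ∃ c : Fin (t + 1) → ℕ, x = ∑ i, c i * (n + i)}

def aperySet (S : Set ℕ) (n : ℕ) : Set ℕ :=
  {s ∈ S | ¬(n ≤ s ∧ s - n ∈ S)}

section

variable {n t x : ℕ}

theorem mem_intervalSemigroup_iff :
    x ∈ intervalSemigroup n t ↔ ∃ m, m * n ≤ x ∧ x ≤ m * (n + t) := by
  constructor
  · rintro ⟨c, rfl⟩
    refine ⟨∑ i, c i, ?_, ?_⟩ <;> rw [sum_mul] <;> refine sum_le_sum fun i _ => ?_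
    · exact Nat.mul_le_mul_left _ (Nat.le_add_right n i)
    · exact Nat.mul_le_mul_left _ (Nat.add_le_add_left (Nat.lt_succ_iff.mp i.isLt) n)
  · rintro ⟨m, hlo, hhi⟩
    induction m generalizing x with
    | zero => exact ⟨0, by simpa using hhi⟩
    | succ m ih =>
      -- remove one generator `n + j`, with `j ≤ t` maximal such that `m * n ≤ x - (n + j)`
      rw [Nat.succ_mul] at hlo hhi
      generalize hj : min (x - (m * n + n)) t = j
      have hmn : m * n ≤ m * (n + t) := Nat.mul_le_mul_left m (Nat.le_add_right n t)
      obtain ⟨c, hc⟩ := ih (x := x - (n + j)) (by omega) (by omega)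
      refine ⟨c + Pi.single ⟨j, by omega⟩ 1, ?_⟩
      simp only [Pi.add_apply, add_mul, sum_add_distrib, Pi.single_apply, ite_mul, one_mul,
        zero_mul, sum_ite_eq', mem_univ, if_true, ← hc]
      omega

theorem add_mul_mem_intervalSemigroup_iff {q k : ℕ} (ht : 0 < t) (hk : k < n) :
    q * n + k ∈ intervalSemigroup n t ↔ k ⌈/⌉ t ≤ q := by
  rw [mem_intervalSemigroup_iff, ceilDiv_le_iff_le_mul ht]
  constructor
  · rintro ⟨m, hlo, hhi⟩
    have hm : m ≤ q := by
      by_contra! h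
      nlinarith
    nlinarith
  · intro h
    exact ⟨q, Nat.le_add_right _ _, by nlinarith⟩

theorem add_mul_mem_aperySet_iff {q k : ℕ} (ht : 0 < t) (hk : k < n) :
    q * n + k ∈ aperySet (intervalSemigroup n t) n ↔ q = k ⌈/⌉ t := by
  simp only [aperySet, Set.mem_sep_iff, add_mul_mem_intervalSemigroup_iff ht hk]
  cases q with
  | zero =>
    simp only [zero_mul, zero_add, not_le_of_gt hk, false_and, not_false_eq_true, and_true]
    rw [Nat.le_zero, eq_comm]
  | succ q =>
    rw [show (q + 1) * n + k - n = q * n + k by rw [add_mul]; omega,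
      add_mul_mem_intervalSemigroup_iff ht hk]
    simp only [add_mul, one_mul]
    omega

theorem mem_aperySet_intervalSemigroup_iff (ht : 0 < t) (hn : 0 < n) :
    x ∈ aperySet (intervalSemigroup n t) n ↔ ∃ k < n, x = k ⌈/⌉ t * n + k := by
  constructor
  · intro hx
    rw [← Nat.div_add_mod' x n, add_mul_mem_aperySet_iff ht (Nat.mod_lt x hn)] at hx
    exact ⟨x % n, Nat.mod_lt x hn, by rw [← hx, Nat.div_add_mod']⟩
  · rintro ⟨k, hk, rfl⟩
    exact (add_mul_mem_aperySet_iff ht hk).2 rfl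

end

theorem stmt_3_general (n t : ℕ) (ht1 : 1 ≤ t)
    (S : Set ℕ)
    (hS : S = {x : ℕ | ∃ c : Fin (t + 1) → ℕ, x = ∑ i, c i * (n + i)}) :
    {s ∈ S | ¬(n ≤ s ∧ s - n ∈ S)} =
      {x : ℕ | ∃ k < n, x = ((k + t - 1) / t) * n + k} ∧
    ∀ k < n, ((k + t - 1) / t) * n + k ∈ S ∧
      (((k + t - 1) / t) * n + k) % n = k ∧
      ∀ s ∈ S, s % n = k → ((k + t - 1) / t) * n + k ≤ s := by
  subst hS
  -- `k ⌈/⌉ t` is definitionally `(k + t - 1) / t` (`Nat.ceilDiv_eq_add_pred_div`)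
  change aperySet (intervalSemigroup n t) n = {x | ∃ k < n, x = k ⌈/⌉ t * n + k} ∧
    ∀ k < n, k ⌈/⌉ t * n + k ∈ intervalSemigroup n t ∧ (k ⌈/⌉ t * n + k) % n = k ∧
      ∀ s ∈ intervalSemigroup n t, s % n = k → k ⌈/⌉ t * n + k ≤ s
  rcases Nat.eq_zero_or_pos n with rfl | hn
  · simp [aperySet]
  refine ⟨Set.ext fun x => mem_aperySet_intervalSemigroup_iff ht1 hn,
    fun k hk => ⟨(add_mul_mem_intervalSemigroup_iff ht1 hk).2 le_rfl,
      Nat.mul_add_mod_of_lt hk, fun s hs hsk => ?_⟩⟩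
  rw [← Nat.div_add_mod' s n, hsk] at hs ⊢
  have hq := (add_mul_mem_intervalSemigroup_iff ht1 hk).1 hs
  exact Nat.add_le_add_right (Nat.mul_le_mul_right n hq) k

/-- For `S = ⟨n, n+1, …, n+t⟩` with `1 ≤ t < n`, the Apéry set of `n` equals
`{⌈k/t⌉·n + k : 0 ≤ k ≤ n-1}` (here `⌈k/t⌉ = (k + t - 1)/t` in ℕ), and
`w(k) = ⌈k/t⌉·n + k` is the least element of `S` congruent to `k` mod `n`. -/
theorem stmt_3 (n t : ℕ) (ht1 : 1 ≤ t) (htn : t < n)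
    (S : Set ℕ)
    (hS : S = {x : ℕ | ∃ c : Fin (t + 1) → ℕ, x = ∑ i, c i * (n + i)}) :
    {s ∈ S | ¬(n ≤ s ∧ s - n ∈ S)} =
      {x : ℕ | ∃ k < n, x = ((k + t - 1) / t) * n + k} ∧
    ∀ k < n, ((k + t - 1) / t) * n + k ∈ S ∧
      (((k + t - 1) / t) * n + k) % n = k ∧
      ∀ s ∈ S, s % n = k → ((k + t - 1) / t) * n + k ≤ s :=
  stmt_3_general n t ht1 S hS
end

section
/- Let S = ⟨n, n+1, ..., n+t⟩ with 1 ≤ t < n, and let q be a positive integer. Then q ∈ S if and only if (q mod n) ≤ ⌊q/n⌋·t. -/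
/-!
A sum of `m` of the generators `n, …, n + t` lies in `[m n, m (n + t)]`, and conversely every point
of that interval is such a sum, so `S` is the union of these intervals. Since `m n ≤ q` forces
`m ≤ ⌊q/n⌋`, the number `q` lies in one of them iff it lies in the one for `m = ⌊q/n⌋`, i.e. iff
`q mod n ≤ ⌊q/n⌋ t`.
-/

theorem exists_mul_le_le_mul_of_eq_sum {n t q : ℕ} (c : Fin (t + 1) → ℕ)
    (hq : q = ∑ i, c i * (n + i)) : ∃ m, m * n ≤ q ∧ q ≤ m * (n + t) := by
  subst hq
  refine ⟨∑ i, c i, ?_, ?_⟩ <;> rw [Finset.sum_mul] <;> gcongr with i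
  · omega
  · exact i.is_le

theorem exists_eq_sum_of_mul_le_le_mul {n t q m : ℕ} (hlo : m * n ≤ q) (hhi : q ≤ m * (n + t)) :
    ∃ c : Fin (t + 1) → ℕ, q = ∑ i, c i * (n + i) := by
  induction m generalizing q with
  | zero => exact ⟨0, by simp_all⟩
  | succ m ih =>
    -- peel off one generator `n + j`, with `j` as large as the excess `q - (m + 1) * n` allows
    set j := min (q - (m + 1) * n) t
    obtain ⟨c, hc⟩ := ih (q := q - (n + j)) (by grind) (by grind)
    refine ⟨c + Pi.single (Fin.ofNat _ j) 1, ?_⟩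
    have hj : j < t + 1 := by omega
    simp only [Pi.add_apply, add_mul, Finset.sum_add_distrib, Pi.single_apply, ite_mul, one_mul,
      zero_mul, Finset.sum_ite_eq', Finset.mem_univ, if_true, ← hc, Fin.val_ofNat, Nat.mod_eq_of_lt hj]
    grind

theorem exists_eq_sum_iff_exists_mul_le_le_mul (n t q : ℕ) :
    (∃ c : Fin (t + 1) → ℕ, q = ∑ i, c i * (n + i)) ↔ ∃ m, m * n ≤ q ∧ q ≤ m * (n + t) :=
  ⟨fun ⟨c, hc⟩ => exists_mul_le_le_mul_of_eq_sum c hc,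
    fun ⟨_, hlo, hhi⟩ => exists_eq_sum_of_mul_le_le_mul hlo hhi⟩

theorem exists_mul_le_le_mul_iff_mod_le {n : ℕ} (hn : 0 < n) (t q : ℕ) :
    (∃ m, m * n ≤ q ∧ q ≤ m * (n + t)) ↔ q % n ≤ q / n * t := by
  have hq := Nat.div_add_mod' q n
  constructor
  · rintro ⟨m, hlo, hhi⟩
    have hm : m ≤ q / n := (Nat.le_div_iff_mul_le hn).2 hlo
    have := Nat.mul_le_mul_right n hm
    have := Nat.mul_le_mul_right t hm
    rw [mul_add] at hhi
    omega
  · intro h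
    refine ⟨q / n, Nat.div_mul_le_self q n, ?_⟩
    rw [mul_add]
    omega

theorem stmt_4_general (n t : ℕ) (htn : t < n)
    (S : Set ℕ)
    (hS : S = {x : ℕ | ∃ c : Fin (t + 1) → ℕ, x = ∑ i, c i * (n + i)})
    (q : ℕ) :
    q ∈ S ↔ q % n ≤ q / n * t := by
  subst hS
  exact (exists_eq_sum_iff_exists_mul_le_le_mul n t q).trans
    (exists_mul_le_le_mul_iff_mod_le (by omega) t q)

/-- For `S = ⟨n, n+1, …, n+t⟩` with `1 ≤ t < n` and a positive integer `q`,
`q ∈ S` if and only if `(q mod n) ≤ ⌊q/n⌋·t`. -/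
theorem stmt_4 (n t : ℕ) (ht1 : 1 ≤ t) (htn : t < n)
    (S : Set ℕ)
    (hS : S = {x : ℕ | ∃ c : Fin (t + 1) → ℕ, x = ∑ i, c i * (n + i)})
    (q : ℕ) (hq : 1 ≤ q) :
    q ∈ S ↔ q % n ≤ q / n * t :=
  stmt_4_general n t htn S hS q
end

section
/- Let q ≥ 1 be an integer and S a numerical semigroup with q ∈ S. Then GM_q(S) = L_q(S), i.e., #(S \ (qS* + S)) + 1 = q·m_S + 1. -/
/-!
Write `n = q·m`. Since every nonzero `a ∈ S` is at least `m` and `q·(a - m) ∈ S` (as `q ∈ S`),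
`qS* + S = n + S`; so `S \ (qS* + S)` is the Apéry set of `n` in `S`. Reduction mod `n` maps the
Apéry set bijectively onto `{0, …, n - 1}`: two congruent elements would differ by a positive
multiple of `n ∈ S`, and the least element of `S` in a residue class (which exists because `S` is
cofinite) lies in the Apéry set.
-/

namespace AddSubmonoid

variable (S : AddSubmonoid ℕ)

def aperySet (n : ℕ) : Set ℕ := (S : Set ℕ) \ {x | ∃ t ∈ S, x = n + t}

variable {S}

theorem mod_lt_of_mem_aperySet {n s : ℕ} (hs : s ∈ S.aperySet n) : s % n < n := by
  have hn : n ≠ 0 := by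
    rintro rfl
    exact hs.2 ⟨s, hs.1, (zero_add s).symm⟩
  exact Nat.mod_lt s (Nat.pos_of_ne_zero hn)

theorem injOn_mod_aperySet {n : ℕ} (hn : n ∈ S) : Set.InjOn (· % n) (S.aperySet n) := by
  suffices key : ∀ s ∈ S.aperySet n, ∀ t ∈ S.aperySet n, s % n = t % n → s ≤ t → s = t by
    intro s hs t ht hst
    rcases le_total s t with hle | hle
    · exact key s hs t ht hst hle
    · exact (key t ht s hs hst.symm hle).symm
  rintro s ⟨hsS, -⟩ t ⟨-, htn⟩ hst hle
  obtain ⟨c, hc⟩ := (Nat.modEq_iff_dvd' hle).mp hst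
  rcases c with _ | d
  · omega
  · refine absurd ⟨s + d • n, S.add_mem hsS (S.nsmul_mem hn d), ?_⟩ htn
    rw [smul_eq_mul, mul_comm d n]
    rw [Nat.mul_succ] at hc
    omega

theorem exists_mem_mod_eq (hfin : (S : Set ℕ)ᶜ.Finite) {n : ℕ} (hn : 0 < n) (r : ℕ) :
    ∃ s ∈ S, s % n = r % n := by
  obtain ⟨B, hB⟩ := hfin.bddAbove
  refine ⟨r + (B + 1) * n, ?_, Nat.add_mul_mod_self_right r (B + 1) n⟩
  by_contra hnot
  have : r + (B + 1) * n ≤ B := hB hnot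
  nlinarith

theorem surjOn_mod_aperySet (hfin : (S : Set ℕ)ᶜ.Finite) (n : ℕ) :
    Set.SurjOn (· % n) (S.aperySet n) (Set.Iio n) := by
  classical
  intro r (hr : r < n)
  have hex : ∃ s, s ∈ S ∧ s % n = r := by
    simpa [Nat.mod_eq_of_lt hr] using exists_mem_mod_eq hfin (n := n) (by omega) r
  obtain ⟨hsS, hsr⟩ := Nat.find_spec hex
  refine ⟨Nat.find hex, ⟨hsS, ?_⟩, hsr⟩
  -- an element `n + t` of the Apéry complement would give the smaller element `t` of the class
  rintro ⟨t, htS, hst⟩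
  refine Nat.find_min hex (m := t) (by omega) ⟨htS, ?_⟩
  rw [← hsr, hst, Nat.add_mod_left]

theorem ncard_aperySet (hfin : (S : Set ℕ)ᶜ.Finite) {n : ℕ} (hn : n ∈ S) :
    (S.aperySet n).ncard = n := by
  have hbij : Set.BijOn (· % n) (S.aperySet n) (Set.Iio n) :=
    ⟨fun _ hs => mod_lt_of_mem_aperySet hs, injOn_mod_aperySet hn, surjOn_mod_aperySet hfin n⟩
  rw [hbij.ncard_eq, ← Finset.coe_Iio, Set.ncard_coe_finset, Nat.card_Iio]

theorem exists_ne_zero_mul_add_iff {m q : ℕ} (hm : m ∈ S) (hm0 : m ≠ 0)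
    (hmin : ∀ s ∈ S, s ≠ 0 → m ≤ s) (hq : q ∈ S) (x : ℕ) :
    (∃ a ∈ S, a ≠ 0 ∧ ∃ b ∈ S, x = q * a + b) ↔ ∃ t ∈ S, x = q * m + t := by
  constructor
  · rintro ⟨a, ha, ha0, b, hb, rfl⟩
    refine ⟨(a - m) • q + b, S.add_mem (S.nsmul_mem hq _) hb, ?_⟩
    obtain ⟨d, rfl⟩ := Nat.exists_eq_add_of_le (hmin a ha ha0)
    simp only [smul_eq_mul, Nat.add_sub_cancel_left]
    ring
  · rintro ⟨t, ht, rfl⟩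
    exact ⟨m, hm, hm0, t, ht, rfl⟩

end AddSubmonoid

theorem stmt_7_general (S : Set ℕ) (h0 : 0 ∈ S)
    (hadd : ∀ a ∈ S, ∀ b ∈ S, a + b ∈ S) (hfin : Sᶜ.Finite)
    (m : ℕ) (hm : m ∈ S) (hm0 : m ≠ 0) (hmin : ∀ s ∈ S, s ≠ 0 → m ≤ s)
    (q : ℕ) (hqS : q ∈ S) :
    (S \ {x | ∃ a ∈ S, a ≠ 0 ∧ ∃ b ∈ S, x = q * a + b}).ncard + 1 = q * m + 1 := by
  let T : AddSubmonoid ℕ :=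
    { carrier := S, add_mem' := fun ha hb => hadd _ ha _ hb, zero_mem' := h0 }
  have hqm : q * m ∈ T := by simpa using T.nsmul_mem hm q
  have hset : S \ {x | ∃ a ∈ S, a ≠ 0 ∧ ∃ b ∈ S, x = q * a + b} = T.aperySet (q * m) := by
    ext x
    exact and_congr_right' (not_congr (T.exists_ne_zero_mul_add_iff hm hm0 hmin hqS x))
  rw [hset, AddSubmonoid.ncard_aperySet hfin hqm]

/-- If `q ∈ S`, then the Geil–Matsumoto bound equals the Lewittes bound:
`#(S \ (qS*+S)) + 1 = q·m_S + 1`. -/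
theorem stmt_7 (S : Set ℕ) (h0 : 0 ∈ S)
    (hadd : ∀ a ∈ S, ∀ b ∈ S, a + b ∈ S) (hfin : Sᶜ.Finite)
    (m : ℕ) (hm : m ∈ S) (hm0 : m ≠ 0) (hmin : ∀ s ∈ S, s ≠ 0 → m ≤ s)
    (q : ℕ) (hq : 1 ≤ q) (hqS : q ∈ S) :
    (S \ {x | ∃ a ∈ S, a ≠ 0 ∧ ∃ b ∈ S, x = q * a + b}).ncard + 1 = q * m + 1 :=
  stmt_7_general S h0 hadd hfin m hm hm0 hmin q hqS
end

section
/- Let S be a numerical semigroup, n a nonzero element of S, q ≥ 1 an integer, and w(i) the least element of S congruent to i modulo n for 0 ≤ i ≤ n-1. For k ∈ {0,...,n-1} and i ∈ {1,...,n-1}, set k_i := (k - iq) mod n. Then GM_q(S) = 1 + (1/n)·Σ_{k=0}^{n-1} min_{1 ≤ i ≤ n-1} { qn, q·w(i) - w(k) + w(k_i) }. -/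
/-!
Inside the residue class of `k` modulo `n`, the elements of `S` are `w k + nℕ`. Since `n ∈ S`, the
set `qS* + S` is closed under adding `n` as well, so its part in that class is `t_k + nℕ` for its
least element `t_k ≡ k`. Sorting `x = q a + b` by the residue `i` of `a` (taking `a = w i`, or
`a = n` when `i = 0`, and then `b` least in its class) gives `t_k = w k + aperyGap q n w k`, the
minimum in the formula. Hence exactly `aperyGap q n w k / n` elements of `S \ (qS* + S)` are
`≡ k`, and summing over `k` gives the formula.
-/

open Finset

def IsAperySet (S : AddSubmonoid ℕ) (n : ℕ) (w : ℕ → ℕ) : Prop :=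
  ∀ i < n, w i ∈ S ∧ w i % n = i ∧ ∀ s ∈ S, s % n = i → w i ≤ s

def scaledSumset (S : AddSubmonoid ℕ) (q : ℕ) : Set ℕ :=
  {x | ∃ a ∈ S, a ≠ 0 ∧ ∃ b ∈ S, x = q * a + b}

def residueShift (q n k i : ℕ) : ℕ := (((k : ℤ) - i * q) % n).toNat

def aperyGap (q n : ℕ) (w : ℕ → ℕ) (k : ℕ) : ℤ :=
  (insert ((q : ℤ) * n)
    ((Icc 1 (n - 1)).image fun i => (q : ℤ) * w i - w k + w (residueShift q n k i))).min'
    (insert_nonempty _ _)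

lemma Int.natCast_mod_modEq (x n : ℕ) : ((x % n : ℕ) : ℤ) ≡ x [ZMOD n] := by
  rw [Int.natCast_mod]; exact Int.mod_modEq _ _

lemma Nat.mod_eq_of_intModEq {b j n : ℕ} (hj : j < n) (h : (b : ℤ) ≡ j [ZMOD n]) : b % n = j :=
  Eq.trans (Int.natCast_modEq_iff.mp h) (Nat.mod_eq_of_lt hj)

section residueShift

variable {n : ℕ} (q k i : ℕ)

lemma residueShift_lt (hn0 : n ≠ 0) : residueShift q n k i < n := by
  have := Int.emod_lt_of_pos ((k : ℤ) - i * q) (by omega : (0 : ℤ) < n)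
  have := Int.emod_nonneg ((k : ℤ) - i * q) (by omega : (n : ℤ) ≠ 0)
  unfold residueShift; omega

lemma residueShift_modEq (hn0 : n ≠ 0) :
    (residueShift q n k i : ℤ) ≡ k - i * q [ZMOD n] := by
  rw [residueShift, Int.toNat_of_nonneg (Int.emod_nonneg _ (by omega))]
  exact Int.mod_modEq _ _

end residueShift

namespace IsAperySet

variable {S : AddSubmonoid ℕ} {n : ℕ} {w : ℕ → ℕ}

lemma mem (hw : IsAperySet S n w) {i : ℕ} (hi : i < n) : w i ∈ S := (hw i hi).1

lemma modEq (hw : IsAperySet S n w) {i : ℕ} (hi : i < n) : (w i : ℤ) ≡ i [ZMOD n] :=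
  Int.natCast_modEq_iff.mpr ((hw i hi).2.1.trans (Nat.mod_eq_of_lt hi).symm)

lemma le_of_modEq (hw : IsAperySet S n w) {j b : ℕ} (hj : j < n) (hb : b ∈ S)
    (hbj : (b : ℤ) ≡ j [ZMOD n]) : w j ≤ b :=
  (hw j hj).2.2 b hb (Nat.mod_eq_of_intModEq hj hbj)

lemma mem_of_modEq (hw : IsAperySet S n w) (hn : n ∈ S) {j b : ℕ} (hj : j < n)
    (hbj : (b : ℤ) ≡ j [ZMOD n]) (hle : w j ≤ b) : b ∈ S := by
  have hmod : w j ≡ b [MOD n] := Int.natCast_modEq_iff.mp ((hw.modEq hj).trans hbj.symm)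
  obtain ⟨c, hc⟩ := (Nat.modEq_iff_dvd' hle).mp hmod
  rw [← Nat.add_sub_of_le hle, hc, mul_comm, ← smul_eq_mul]
  exact add_mem (hw.mem hj) (AddSubmonoid.nsmul_mem _ hn c)

lemma mem_iff (hw : IsAperySet S n w) (hn : n ∈ S) (hn0 : n ≠ 0) (x : ℕ) :
    x ∈ S ↔ w (x % n) ≤ x := by
  have hk : x % n < n := Nat.mod_lt x (Nat.pos_of_ne_zero hn0)
  have hx : (x : ℤ) ≡ (x % n : ℕ) [ZMOD n] := (Int.natCast_mod_modEq x n).symm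
  exact ⟨fun hxS => hw.le_of_modEq hk hxS hx, hw.mem_of_modEq hn hk hx⟩

end IsAperySet

lemma aperyGap_eq_or (q n : ℕ) (w : ℕ → ℕ) (k : ℕ) :
    aperyGap q n w k = q * n ∨
      ∃ i ∈ Icc 1 (n - 1), aperyGap q n w k = q * w i - w k + w (residueShift q n k i) := by
  have h := min'_mem _ (insert_nonempty ((q : ℤ) * n)
    ((Icc 1 (n - 1)).image fun i => (q : ℤ) * w i - w k + w (residueShift q n k i)))
  rcases mem_insert.mp h with h | h
  · exact Or.inl h
  · obtain ⟨i, hi, hieq⟩ := mem_image.mp h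
    exact Or.inr ⟨i, hi, hieq.symm⟩

section aperyGap

variable {S : AddSubmonoid ℕ} {n q : ℕ} {w : ℕ → ℕ}

lemma aperyGap_le_iff {k : ℕ} {m : ℤ} :
    aperyGap q n w k ≤ m ↔
      q * n ≤ m ∨ ∃ i ∈ Icc 1 (n - 1), q * w i - w k + w (residueShift q n k i) ≤ m := by
  constructor
  · rcases aperyGap_eq_or q n w k with h | ⟨i, hi, h⟩ <;> rw [h] <;> intro hm
    · exact Or.inl hm
    · exact Or.inr ⟨i, hi, hm⟩
  · rintro (hm | ⟨i, hi, hm⟩)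
    · exact (min'_le _ _ (mem_insert_self _ _)).trans hm
    · exact (min'_le _ _ (mem_insert_of_mem (mem_image_of_mem _ hi))).trans hm

lemma apery_le_mul_add_residueShift (hw : IsAperySet S n w) (hn0 : n ≠ 0) {k i : ℕ}
    (hk : k < n) (hi : i < n) : w k ≤ q * w i + w (residueShift q n k i) := by
  refine hw.le_of_modEq hk (add_mem ?_ (hw.mem (residueShift_lt q k i hn0))) ?_
  · rw [← smul_eq_mul]; exact AddSubmonoid.nsmul_mem _ (hw.mem hi) q
  · push_cast
    calc (q * w i + w (residueShift q n k i) : ℤ) ≡ q * i + (k - i * q) [ZMOD n] :=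
          ((hw.modEq hi).mul_left _).add
            ((hw.modEq (residueShift_lt q k i hn0)).trans (residueShift_modEq q k i hn0))
      _ = k := by ring

lemma aperyGap_nonneg (hw : IsAperySet S n w) (hn0 : n ≠ 0) {k : ℕ} (hk : k < n) :
    0 ≤ aperyGap q n w k := by
  rcases aperyGap_eq_or q n w k with h | ⟨i, hi, h⟩ <;> rw [h]
  · positivity
  · have := apery_le_mul_add_residueShift (q := q) hw hn0 hk (show i < n by grind)
    omega

lemma dvd_aperyGap (hw : IsAperySet S n w) (hn0 : n ≠ 0) {k : ℕ} (hk : k < n) :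
    (n : ℤ) ∣ aperyGap q n w k := by
  rcases aperyGap_eq_or q n w k with h | ⟨i, hi, h⟩ <;> rw [h]
  · exact dvd_mul_left _ _
  · refine Int.modEq_zero_iff_dvd.mp ?_
    calc (q * w i - w k + w (residueShift q n k i) : ℤ) ≡ q * i - k + (k - i * q) [ZMOD n] :=
          (((hw.modEq (by grind)).mul_left _).sub (hw.modEq hk)).add
            ((hw.modEq (residueShift_lt q k i hn0)).trans (residueShift_modEq q k i hn0))
      _ = 0 := by ring

lemma aperyGap_eq_mul (hw : IsAperySet S n w) (hn0 : n ≠ 0) {k : ℕ} (hk : k < n) :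
    aperyGap q n w k = n * (aperyGap q n w k / n).toNat := by
  rw [Int.toNat_of_nonneg (Int.ediv_nonneg (aperyGap_nonneg hw hn0 hk) (Int.natCast_nonneg n)),
    Int.mul_ediv_cancel' (dvd_aperyGap hw hn0 hk)]

end aperyGap

section scaledSumset

variable {S : AddSubmonoid ℕ} {n q : ℕ} {w : ℕ → ℕ}

lemma aperyGap_le_of_mem_scaledSumset (hw : IsAperySet S n w) (hn0 : n ≠ 0) {k x : ℕ}
    (hk : k < n) (hx : (x : ℤ) ≡ k [ZMOD n]) (hxT : x ∈ scaledSumset S q) :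
    aperyGap q n w k ≤ x - w k := by
  obtain ⟨a, ha, ha0, b, hb, rfl⟩ := hxT
  have hia : a % n < n := Nat.mod_lt a (Nat.pos_of_ne_zero hn0)
  have hai : (a : ℤ) ≡ (a % n : ℕ) [ZMOD n] := (Int.natCast_mod_modEq a n).symm
  have hbk : (b : ℤ) ≡ k - (a % n : ℕ) * q [ZMOD n] := by
    calc (b : ℤ) = (q * a + b : ℕ) - a * q := by push_cast; ring
      _ ≡ k - (a % n : ℕ) * q [ZMOD n] := hx.sub (hai.mul_right _)
  rw [aperyGap_le_iff]
  by_cases hi0 : a % n = 0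
  · have hna : n ≤ a := Nat.le_of_dvd (Nat.pos_of_ne_zero ha0) (Nat.dvd_of_mod_eq_zero hi0)
    have hwb : w k ≤ b := hw.le_of_modEq hk hb (by simpa [hi0] using hbk)
    left
    push_cast
    nlinarith
  · have hwa : w (a % n) ≤ a := hw.le_of_modEq hia ha hai
    have hwb : w (residueShift q n k (a % n)) ≤ b :=
      hw.le_of_modEq (residueShift_lt q k _ hn0) hb (hbk.trans (residueShift_modEq q k _ hn0).symm)
    right
    refine ⟨a % n, mem_Icc.mpr ⟨by omega, by omega⟩, ?_⟩
    push_cast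
    nlinarith

lemma mem_scaledSumset_of_aperyGap_le (hw : IsAperySet S n w) (hn : n ∈ S) (hn0 : n ≠ 0)
    {k x : ℕ} (hk : k < n) (hx : (x : ℤ) ≡ k [ZMOD n]) (hle : aperyGap q n w k ≤ x - w k) :
    x ∈ scaledSumset S q := by
  rcases aperyGap_le_iff.mp hle with hle | ⟨i, hi, hle⟩
  · obtain ⟨b, rfl⟩ : ∃ b, x = q * n + b := Nat.exists_eq_add_of_le (by zify; linarith)
    push_cast at hle
    refine ⟨n, hn, hn0, b, hw.mem_of_modEq hn hk ?_ (by zify; linarith), rfl⟩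
    calc (b : ℤ) = (q * n + b : ℕ) - n * q := by push_cast; ring
      _ ≡ k - 0 * q [ZMOD n] := hx.sub ((Int.modEq_zero_iff_dvd.mpr dvd_rfl).mul_right _)
      _ = k := by ring
  · obtain ⟨hi1, hin⟩ : 1 ≤ i ∧ i < n := by grind
    have hki := residueShift_lt q k i hn0
    obtain ⟨b, rfl⟩ : ∃ b, x = q * w i + b := Nat.exists_eq_add_of_le (by zify; linarith)
    push_cast at hle
    have hwi0 : w i ≠ 0 := fun h => by have := (hw i hin).2.1; simp [h] at this; omega
    refine ⟨w i, hw.mem hin, hwi0, b, hw.mem_of_modEq hn hki ?_ (by zify; linarith), rfl⟩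
    calc (b : ℤ) = (q * w i + b : ℕ) - w i * q := by push_cast; ring
      _ ≡ k - i * q [ZMOD n] := hx.sub ((hw.modEq hin).mul_right _)
      _ ≡ residueShift q n k i [ZMOD n] := (residueShift_modEq q k i hn0).symm

lemma mem_scaledSumset_iff (hw : IsAperySet S n w) (hn : n ∈ S) (hn0 : n ≠ 0) {k x : ℕ}
    (hk : k < n) (hx : (x : ℤ) ≡ k [ZMOD n]) :
    x ∈ scaledSumset S q ↔ aperyGap q n w k ≤ x - w k :=
  ⟨aperyGap_le_of_mem_scaledSumset hw hn0 hk hx, mem_scaledSumset_of_aperyGap_le hw hn hn0 hk hx⟩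

end scaledSumset

lemma ncard_setOf_le_lt_add_mul {n : ℕ} (hn : 0 < n) (lo c : ℕ → ℕ)
    (hlo : ∀ k < n, lo k % n = k) :
    {x | lo (x % n) ≤ x ∧ x < lo (x % n) + n * c (x % n)}.ncard = ∑ k ∈ range n, c k := by
  have hmod : ∀ k < n, ∀ j, (lo k + n * j) % n = k := fun k hk j => by
    rw [Nat.add_mul_mod_self_left, hlo k hk]
  have hset : {x | lo (x % n) ≤ x ∧ x < lo (x % n) + n * c (x % n)} =
      ↑((range n).biUnion fun k => (range (c k)).image fun j => lo k + n * j) := by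
    ext x
    simp only [Set.mem_ofPred_eq, coe_biUnion, coe_image, coe_range, Set.mem_iUnion,
      Set.mem_image, Set.mem_Iio]
    constructor
    · rintro ⟨hle, hlt⟩
      have hk := Nat.mod_lt x hn
      obtain ⟨j, hj⟩ := (Nat.modEq_iff_dvd' hle).mp (hlo _ hk)
      refine ⟨x % n, hk, j, ?_, by omega⟩
      by_contra! hcj
      have := Nat.mul_le_mul_left n hcj
      omega
    · rintro ⟨k, hk, j, hj, rfl⟩
      rw [hmod k hk]
      exact ⟨by omega, by nlinarith [Nat.mul_lt_mul_of_pos_left hj hn]⟩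
  rw [hset, Set.ncard_coe_finset, card_biUnion]
  · refine sum_congr rfl fun k _ => ?_
    rw [card_image_of_injective _ fun j j' h => ?_, card_range]
    simpa [hn.ne'] using h
  · intro k hk k' hk' hne
    simp only [Function.onFun, disjoint_left, mem_image, mem_range, not_exists, not_and]
    rintro _ ⟨j, _, rfl⟩ j' _ h
    exact hne (by rw [← hmod k (by simpa using hk) j, ← h, hmod k' (by simpa using hk') j'])

theorem stmt_10_general (S : Set ℕ) (h0 : 0 ∈ S)
    (hadd : ∀ a ∈ S, ∀ b ∈ S, a + b ∈ S)
    (n : ℕ) (hn : n ∈ S) (hn0 : n ≠ 0)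
    (q : ℕ)
    (w : ℕ → ℕ)
    (hw : ∀ i < n, w i ∈ S ∧ w i % n = i ∧ ∀ s ∈ S, s % n = i → w i ≤ s) :
    (n : ℤ) * (S \ {x | ∃ a ∈ S, a ≠ 0 ∧ ∃ b ∈ S, x = q * a + b}).ncard
      = ∑ k ∈ Finset.range n,
          (insert ((q : ℤ) * n)
            ((Finset.Icc 1 (n - 1)).image fun i =>
              (q : ℤ) * w i - w k + w ((((k : ℤ) - i * q) % n).toNat))).min'
            (Finset.insert_nonempty _ _) := by
  let M : AddSubmonoid ℕ := ⟨⟨S, fun {a b} ha hb => hadd a ha b hb⟩, h0⟩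
  have hwM : IsAperySet M n w := hw
  have hpos := Nat.pos_of_ne_zero hn0
  set c : ℕ → ℕ := fun k => (aperyGap q n w k / n).toNat
  have hset : S \ {x | ∃ a ∈ S, a ≠ 0 ∧ ∃ b ∈ S, x = q * a + b} =
      {x | w (x % n) ≤ x ∧ x < w (x % n) + n * c (x % n)} := by
    ext x
    have hk := Nat.mod_lt x hpos
    change x ∈ M ∧ x ∉ scaledSumset M q ↔ w (x % n) ≤ x ∧ x < w (x % n) + n * c (x % n)
    rw [hwM.mem_iff hn hn0, mem_scaledSumset_iff hwM hn hn0 hk (Int.natCast_mod_modEq x n).symm,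
      aperyGap_eq_mul hwM hn0 hk]
    simp only [c]
    omega
  rw [hset, ncard_setOf_le_lt_add_mul hpos w c fun k hk => (hw k hk).2.1]
  push_cast
  rw [mul_sum]
  exact sum_congr rfl fun k hk => (aperyGap_eq_mul hwM hn0 (mem_range.mp hk)).symm

/-- Closed formula for the Geil–Matsumoto bound in terms of the Apéry set:
`GM_q(S) = 1 + (1/n)·Σ_{k=0}^{n-1} min_{1 ≤ i ≤ n-1} {qn, q·w(i) - w(k) + w(k_i)}`,
where `k_i := (k - iq) mod n`.  (Stated multiplied through by `n`:
`n·(GM_q(S) - 1) = Σ_k min{…}`, where `GM_q(S) - 1 = #(S \ (qS*+S))`.) -/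
theorem stmt_10 (S : Set ℕ) (h0 : 0 ∈ S)
    (hadd : ∀ a ∈ S, ∀ b ∈ S, a + b ∈ S) (hfin : Sᶜ.Finite)
    (n : ℕ) (hn : n ∈ S) (hn0 : n ≠ 0)
    (q : ℕ) (hq : 1 ≤ q)
    (w : ℕ → ℕ)
    (hw : ∀ i < n, w i ∈ S ∧ w i % n = i ∧ ∀ s ∈ S, s % n = i → w i ≤ s) :
    (n : ℤ) * (S \ {x | ∃ a ∈ S, a ≠ 0 ∧ ∃ b ∈ S, x = q * a + b}).ncard
      = ∑ k ∈ Finset.range n,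
          (insert ((q : ℤ) * n)
            ((Finset.Icc 1 (n - 1)).image fun i =>
              (q : ℤ) * w i - w k + w ((((k : ℤ) - i * q) % n).toNat))).min'
            (Finset.insert_nonempty _ _) :=
  stmt_10_general S h0 hadd n hn hn0 q w hw
end

section
/- Let a < b be coprime positive integers, S = ⟨a, b⟩, and q ≥ 1. Then GM_q(S) = 1 + Σ_{k=0}^{a-1} min{ q, ⌈(q-k)/a⌉·b }. -/
/-!
Every element of `S = ⟨a, b⟩` is uniquely `c a + d b` with `0 ≤ d < a`, and an integer `c a + e b`
lies in `S` exactly when `c ≥ ⌈-e / a⌉ b`. Since every nonzero element of `S` lies in `a + S` or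
`b + S`, an element `x = c a + d b` lies in `q S* + S` iff `x - q a` or `x - q b` lies in `S`, i.e.
iff `c ≥ q` or `c ≥ ⌈(q - d) / a⌉ b`. So for each residue `d` there are exactly
`min q (⌈(q - d) / a⌉ b)` admissible `c`.
-/

open Finset

def genSemigroup (a b : ℕ) : Set ℕ := {x | ∃ c d : ℕ, x = c * a + d * b}

/-- `q S* + S` in the paper's notation. -/
def mulNonzeroAdd (S : Set ℕ) (q : ℕ) : Set ℕ := {x | ∃ u ∈ S, u ≠ 0 ∧ ∃ v ∈ S, x = q * u + v}

namespace genSemigroup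

variable {a b : ℕ}

theorem exists_eq_of_lt (ha : 0 < a) (c₀ d₀ : ℕ) :
    ∃ c d, d < a ∧ c₀ * a + d₀ * b = c * a + d * b :=
  ⟨c₀ + d₀ / a * b, d₀ % a, Nat.mod_lt _ ha, by nth_rw 1 [← Nat.mod_add_div d₀ a]; ring⟩

theorem exists_natCombination_iff (ha : 0 < a) (hcop : a.Coprime b) (c e : ℤ) :
    (∃ c' d' : ℕ, (c' * a + d' * b : ℤ) = c * a + e * b) ↔ ∃ t : ℤ, -e ≤ t * a ∧ t * b ≤ c := by
  constructor
  · rintro ⟨c', d', h⟩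
    have hdvd : (a : ℤ) ∣ (d' - e) * b := ⟨c - c', by linear_combination h⟩
    obtain ⟨t, ht⟩ := (Nat.isCoprime_iff_coprime.mpr hcop).dvd_of_dvd_mul_right hdvd
    have hmul : (c - c' - t * b) * a = 0 := by linear_combination -h + (b : ℤ) * ht
    have hc : c = c' + t * b := by
      have := (mul_eq_zero.mp hmul).resolve_right (by exact_mod_cast ha.ne')
      linarith
    exact ⟨t, by linarith [Int.natCast_nonneg d'], by linarith [Int.natCast_nonneg c']⟩
  · rintro ⟨t, he, hc⟩
    refine ⟨(c - t * b).toNat, (e + t * a).toNat, ?_⟩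
    rw [Int.toNat_of_nonneg (by linarith), Int.toNat_of_nonneg (by linarith)]
    ring

theorem exists_natCombination_iff_of_lt (ha : 0 < a) (hcop : a.Coprime b) (c : ℤ) {d : ℕ}
    (hd : d < a) : (∃ c' d' : ℕ, (c' * a + d' * b : ℤ) = c * a + d * b) ↔ 0 ≤ c := by
  rw [exists_natCombination_iff ha hcop]
  constructor
  · rintro ⟨t, hdt, htc⟩
    have ht : 0 ≤ t := by
      by_contra! ht
      nlinarith [(show (d : ℤ) < a by exact_mod_cast hd)]
    nlinarith [Int.natCast_nonneg b]
  · intro hc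
    exact ⟨0, by simp, by simpa using hc⟩

theorem eq_of_mul_add_mul_eq (ha : 0 < a) (hb : 0 < b) (hcop : a.Coprime b) {c d c' d' : ℕ}
    (hd : d < a) (hd' : d' < a) (h : c * a + d * b = c' * a + d' * b) : c = c' ∧ d = d' := by
  have hle : ∀ {c d c' d' : ℕ}, d < a → c * a + d * b = c' * a + d' * b → c' ≤ c := by
    intro c d c' d' hd h
    have := (exists_natCombination_iff_of_lt ha hcop (c - c') hd).mp
      ⟨0, d', by zify at h; linear_combination -h⟩
    omega
  have hc : c = c' := le_antisymm (hle hd' h.symm) (hle hd h)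
  subst hc
  exact ⟨rfl, Nat.eq_of_mul_eq_mul_right hb (by omega)⟩

end genSemigroup

theorem exists_le_mul_and_mul_le_iff_ceil {a : ℕ} (ha : 0 < a) {b : ℤ} (hb : 0 ≤ b) (n c : ℤ) :
    (∃ t : ℤ, n ≤ t * a ∧ t * b ≤ c) ↔ ⌈(n : ℚ) / a⌉ * b ≤ c := by
  have ha' : (0 : ℚ) < a := by exact_mod_cast ha
  constructor
  · rintro ⟨t, hn, ht⟩
    have : ⌈(n : ℚ) / a⌉ ≤ t := by
      rw [Int.ceil_le, div_le_iff₀ ha']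
      exact_mod_cast hn
    exact (mul_le_mul_of_nonneg_right this hb).trans ht
  · intro h
    refine ⟨_, ?_, h⟩
    have := (div_le_iff₀ ha').mp (Int.le_ceil ((n : ℚ) / a))
    exact_mod_cast this

namespace mulNonzeroAdd

variable {a b : ℕ}

theorem mul_add_mul_mem_iff (ha : 0 < a) (hb : 0 < b) (q c d : ℕ) :
    c * a + d * b ∈ mulNonzeroAdd (genSemigroup a b) q ↔
      (∃ c' d' : ℕ, (c' * a + d' * b : ℤ) = (c - q : ℤ) * a + d * b) ∨
        ∃ c' d' : ℕ, (c' * a + d' * b : ℤ) = c * a + (d - q : ℤ) * b := by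
  constructor
  · rintro ⟨u, ⟨cu, du, rfl⟩, hu, v, ⟨cv, dv, rfl⟩, hx⟩
    obtain ⟨k, rfl⟩ | ⟨k, rfl⟩ : (∃ k, cu = k + 1) ∨ ∃ k, du = k + 1 := by
      rcases cu with _ | k
      · rcases du with _ | k
        · simp at hu
        · exact Or.inr ⟨k, rfl⟩
      · exact Or.inl ⟨k, rfl⟩
    all_goals zify at hx
    · exact Or.inl ⟨q * k + cv, q * du + dv, by push_cast; linear_combination -hx⟩
    · exact Or.inr ⟨q * cu + cv, q * k + dv, by push_cast; linear_combination -hx⟩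
  · rintro (⟨c', d', h⟩ | ⟨c', d', h⟩)
    · exact ⟨a, ⟨1, 0, by ring⟩, ha.ne', _, ⟨c', d', rfl⟩, by zify; linear_combination -h⟩
    · exact ⟨b, ⟨0, 1, by ring⟩, hb.ne', _, ⟨c', d', rfl⟩, by zify; linear_combination -h⟩

theorem mul_add_mul_mem_iff_of_lt (ha : 0 < a) (hb : 0 < b) (hcop : a.Coprime b) (q c : ℕ)
    {d : ℕ} (hd : d < a) :
    c * a + d * b ∈ mulNonzeroAdd (genSemigroup a b) q ↔
      q ≤ c ∨ ⌈((q : ℚ) - d) / a⌉ * b ≤ c := by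
  rw [mul_add_mul_mem_iff ha hb, genSemigroup.exists_natCombination_iff_of_lt ha hcop _ hd,
    genSemigroup.exists_natCombination_iff ha hcop, neg_sub,
    exists_le_mul_and_mul_le_iff_ceil ha (Int.natCast_nonneg b)]
  push_cast
  omega

end mulNonzeroAdd

/-- The coordinates `(d, c)` of the elements `c a + d b` of `S \ (q S* + S)`. -/
def diffCoords (a b q : ℕ) : Finset ((_ : ℕ) × ℕ) :=
  (range a).sigma fun d => range (min q (⌈((q : ℚ) - d) / a⌉ * b).toNat)

theorem mem_diffCoords {a b q d c : ℕ} :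
    ⟨d, c⟩ ∈ diffCoords a b q ↔ d < a ∧ c < q ∧ (c : ℤ) < ⌈((q : ℚ) - d) / a⌉ * b := by
  simp [diffCoords, Int.lt_toNat]

theorem diff_mulNonzeroAdd_eq_image {a b : ℕ} (ha : 0 < a) (hb : 0 < b) (hcop : a.Coprime b)
    (q : ℕ) :
    genSemigroup a b \ mulNonzeroAdd (genSemigroup a b) q =
      (fun p : (_ : ℕ) × ℕ => p.2 * a + p.1 * b) '' ↑(diffCoords a b q) := by
  ext x
  simp only [Set.mem_sdiff, Set.mem_image, Finset.mem_coe, Sigma.exists, mem_diffCoords]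
  constructor
  · rintro ⟨⟨c₀, d₀, rfl⟩, hx⟩
    obtain ⟨c, d, hd, hcd⟩ := genSemigroup.exists_eq_of_lt (b := b) ha c₀ d₀
    rw [hcd, mulNonzeroAdd.mul_add_mul_mem_iff_of_lt ha hb hcop q c hd] at hx
    push Not at hx
    exact ⟨d, c, ⟨hd, hx⟩, hcd.symm⟩
  · rintro ⟨d, c, ⟨hd, hx⟩, rfl⟩
    refine ⟨⟨c, d, rfl⟩, ?_⟩
    rw [mulNonzeroAdd.mul_add_mul_mem_iff_of_lt ha hb hcop q c hd]
    push Not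
    exact hx

theorem injOn_diffCoords {a b : ℕ} (ha : 0 < a) (hb : 0 < b) (hcop : a.Coprime b) (q : ℕ) :
    Set.InjOn (fun p : (_ : ℕ) × ℕ => p.2 * a + p.1 * b) ↑(diffCoords a b q) := by
  rintro ⟨d, c⟩ hp ⟨d', c'⟩ hp' h
  simp only [Finset.mem_coe, mem_diffCoords] at hp hp'
  obtain ⟨rfl, rfl⟩ := genSemigroup.eq_of_mul_add_mul_eq ha hb hcop hp.1 hp'.1 h
  rfl

theorem card_diffCoords {a b : ℕ} (q : ℕ) :
    ((diffCoords a b q).card : ℤ) = ∑ k ∈ range a, min (q : ℤ) (⌈((q : ℚ) - k) / a⌉ * b) := by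
  rw [diffCoords, card_sigma]
  push_cast
  refine sum_congr rfl fun k hk => ?_
  have hk : (k : ℚ) < a := by exact_mod_cast mem_range.mp hk
  have hceil : 0 ≤ ⌈((q : ℚ) - k) / a⌉ := Int.ceil_nonneg_of_neg_one_lt <| by
    rw [lt_div_iff₀ (by linarith [(Nat.cast_nonneg k : (0 : ℚ) ≤ k)])]
    linarith [(Nat.cast_nonneg q : (0 : ℚ) ≤ q)]
  simp only [card_range, Nat.cast_min,
    Int.toNat_of_nonneg (mul_nonneg hceil (Int.natCast_nonneg b))]

theorem stmt_13_general (a b : ℕ) (ha : 1 ≤ a) (hab : a < b) (hcop : Nat.Coprime a b)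
    (S : Set ℕ) (hS : S = {x : ℕ | ∃ c d : ℕ, x = c * a + d * b})
    (q : ℕ) :
    ((S \ {x | ∃ u ∈ S, u ≠ 0 ∧ ∃ v ∈ S, x = q * u + v}).ncard : ℤ) + 1
      = 1 + ∑ k ∈ Finset.range a, min (q : ℤ) (⌈((q : ℚ) - k) / a⌉ * b) := by
  have hb : 0 < b := by omega
  have hdiff : S \ {x | ∃ u ∈ S, u ≠ 0 ∧ ∃ v ∈ S, x = q * u + v} =
      genSemigroup a b \ mulNonzeroAdd (genSemigroup a b) q := by
    subst hS; rfl
  rw [hdiff, diff_mulNonzeroAdd_eq_image ha hb hcop, (injOn_diffCoords ha hb hcop q).ncard_image,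
    Set.ncard_coe_finset, card_diffCoords, add_comm]

/-- Bras-Amorós–Vico-Oton: for coprime `a < b`,
`GM_q(⟨a,b⟩) = 1 + Σ_{k=0}^{a-1} min{q, ⌈(q-k)/a⌉·b}`. -/
theorem stmt_13 (a b : ℕ) (ha : 1 ≤ a) (hab : a < b) (hcop : Nat.Coprime a b)
    (S : Set ℕ) (hS : S = {x : ℕ | ∃ c d : ℕ, x = c * a + d * b})
    (q : ℕ) (hq : 1 ≤ q) :
    ((S \ {x | ∃ u ∈ S, u ≠ 0 ∧ ∃ v ∈ S, x = q * u + v}).ncard : ℤ) + 1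
      = 1 + ∑ k ∈ Finset.range a, min (q : ℤ) (⌈((q : ℚ) - k) / a⌉ * b) :=
  stmt_13_general a b ha hab hcop S hS q
end

section
/- Let q ≥ 2, 1 ≤ t < n, 1 ≤ i ≤ t, and 1 ≤ k ≤ t. Set k_i := (k - iq) mod n and C_{k,i} := q - ⌈k/t⌉ + ⌈k_i/t⌉ + ⌈(iq - k)/n⌉. Then min_{1 ≤ i ≤ t} { q, C_{k,i} } equals q - 1 if q divides k, and equals q otherwise. -/
/-!
Since `1 ≤ k ≤ t` we have `⌈k/t⌉ = 1`, so `C_{k,i} = q - 1 + E(k - iq)` with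
`E(m) = ⌈(m mod n)/t⌉ + ⌈-m/n⌉`. Because `k < n`, every `m = k - iq` satisfies `m < n`, and for
such `m` both ceilings are nonnegative, while at least one is positive unless `m = 0`. Hence
`C_{k,i} ≥ q - 1`, with equality exactly when `k = iq`; such an `i ∈ [1, t]` exists iff `q ∣ k`.
-/

open Finset

section Ceil

variable {𝕜 : Type*} [Field 𝕜] [LinearOrder 𝕜] [IsStrictOrderedRing 𝕜] [FloorRing 𝕜]

theorem Int.ceil_div_eq_one {a b : 𝕜} (ha : 0 < a) (hab : a ≤ b) : ⌈a / b⌉ = 1 := by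
  rw [Int.ceil_eq_iff]
  push_cast
  exact ⟨by simpa using div_pos ha (ha.trans_le hab), (div_le_one (ha.trans_le hab)).2 hab⟩

theorem Int.ceil_div_nonneg_of_neg_lt {x d : 𝕜} (hd : 0 < d) (hx : -d < x) : 0 ≤ ⌈x / d⌉ :=
  Int.ceil_nonneg_of_neg_one_lt <| by rwa [lt_div_iff₀ hd, neg_one_mul]

end Ceil

def excess (n t : ℕ) (m : ℤ) : ℤ :=
  ⌈(((m % n).toNat : ℕ) : ℚ) / t⌉ + ⌈((-m : ℤ) : ℚ) / n⌉

section Excess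

variable {n t : ℕ} {m : ℤ}

theorem excess_zero : excess n t 0 = 0 := by
  simp [excess]

theorem excess_nonneg (hn : 0 < n) (hmn : m < n) : 0 ≤ excess n t m := by
  have hnQ : (0 : ℚ) < n := by exact_mod_cast hn
  refine add_nonneg (Int.ceil_nonneg (by positivity)) (Int.ceil_div_nonneg_of_neg_lt hnQ ?_)
  push_cast
  exact_mod_cast neg_lt_neg hmn

theorem excess_pos (ht : 0 < t) (hn : 0 < n) (hmn : m < n) (hm : m ≠ 0) :
    0 < excess n t m := by
  have hnQ : (0 : ℚ) < n := by exact_mod_cast hn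
  rcases lt_or_gt_of_ne hm with hneg | hpos
  · have hceil : 0 < ⌈((-m : ℤ) : ℚ) / n⌉ :=
      Int.ceil_pos.2 (div_pos (by exact_mod_cast neg_pos.2 hneg) hnQ)
    exact add_pos_of_nonneg_of_pos (Int.ceil_nonneg (by positivity)) hceil
  · have hmod : (m % n).toNat = m.toNat := by rw [Int.emod_eq_of_lt hpos.le hmn]
    have hceil : 0 < ⌈(((m % n).toNat : ℕ) : ℚ) / t⌉ :=
      Int.ceil_pos.2 <| div_pos (by rw [hmod]; exact_mod_cast Int.lt_toNat.2 hpos)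
        (by exact_mod_cast ht)
    refine add_pos_of_pos_of_nonneg hceil (Int.ceil_div_nonneg_of_neg_lt hnQ ?_)
    push_cast
    exact_mod_cast neg_lt_neg hmn

theorem excess_eq_zero_iff (ht : 0 < t) (hn : 0 < n) (hmn : m < n) :
    excess n t m = 0 ↔ m = 0 := by
  refine ⟨fun h => by_contra fun hm => (excess_pos ht hn hmn hm).ne' h, ?_⟩
  rintro rfl
  exact excess_zero

end Excess

theorem inf'_min_sub_one_add {ι : Type*} (s : Finset ι) (hs : s.Nonempty) (a : ℤ) (E : ι → ℤ)
    (hE : ∀ i ∈ s, 0 ≤ E i) (P : Prop) [Decidable P] (hP : P ↔ ∃ i ∈ s, E i = 0) :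
    s.inf' hs (fun i => min a (a - 1 + E i)) = if P then a - 1 else a := by
  split_ifs with h
  · obtain ⟨i, hi, hEi⟩ := hP.1 h
    refine le_antisymm ((inf'_le _ hi).trans (by simp [hEi])) (le_inf' _ _ fun j hj => ?_)
    have := hE j hj
    exact le_min (by omega) (by omega)
  · obtain ⟨i, hi⟩ := hs
    refine le_antisymm ((inf'_le _ hi).trans (min_le_left _ _)) (le_inf' _ _ fun j hj => ?_)
    have hEj : E j ≠ 0 := fun h0 => h (hP.2 ⟨j, hj, h0⟩)
    have := hE j hj
    exact le_min le_rfl (by omega)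

theorem exists_mem_Icc_mul_eq_iff_dvd {q k t : ℕ} (hk1 : 1 ≤ k) (hkt : k ≤ t) :
    (∃ i ∈ Icc 1 t, k = i * q) ↔ q ∣ k := by
  refine ⟨fun ⟨i, _, hi⟩ => ⟨i, hi.trans (mul_comm i q)⟩,
    fun ⟨c, hc⟩ => ⟨c, ?_, hc.trans (mul_comm q c)⟩⟩
  have hc0 : c ≠ 0 := by rintro rfl; omega
  have hq0 : q ≠ 0 := by rintro rfl; omega
  exact mem_Icc.2 ⟨Nat.one_le_iff_ne_zero.2 hc0,
    (Nat.le_mul_of_pos_left c (Nat.pos_of_ne_zero hq0)).trans (hc ▸ hkt)⟩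

theorem stmt_17_general (q n t k : ℕ) (ht1 : 1 ≤ t) (htn : t < n)
    (hk1 : 1 ≤ k) (hkt : k ≤ t) :
    (Finset.Icc 1 t).inf' (Finset.nonempty_Icc.mpr ht1) (fun i =>
      min (q : ℤ)
        ((q : ℤ) - ⌈(k : ℚ) / t⌉
          + ⌈(((((k : ℤ) - i * q) % n).toNat : ℚ)) / t⌉
          + ⌈((i : ℚ) * q - k) / n⌉))
      = if q ∣ k then (q : ℤ) - 1 else (q : ℤ) := by
  have ht : 0 < t := ht1
  have hn : 0 < n := ht.trans htn
  have hceil : ⌈(k : ℚ) / t⌉ = 1 :=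
    Int.ceil_div_eq_one (by exact_mod_cast hk1) (by exact_mod_cast hkt)
  have hlt : ∀ i : ℕ, (k : ℤ) - i * q < n := fun i => by
    have : (0 : ℤ) ≤ i * q := by positivity
    omega
  have hC : ∀ i : ℕ, (q : ℤ) - ⌈(k : ℚ) / t⌉ + ⌈(((((k : ℤ) - i * q) % n).toNat : ℚ)) / t⌉
      + ⌈((i : ℚ) * q - k) / n⌉ = q - 1 + excess n t (k - i * q) := fun i => by
    rw [hceil, excess, show ((i : ℚ) * q - k) = ((-((k : ℤ) - i * q) : ℤ) : ℚ) by push_cast; ring]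
    ring
  simp only [hC]
  refine inf'_min_sub_one_add _ _ _ _ (fun i _ => excess_nonneg hn (hlt i)) _ ?_
  simp only [excess_eq_zero_iff ht hn (hlt _), sub_eq_zero]
  exact_mod_cast (exists_mem_Icc_mul_eq_iff_dvd hk1 hkt).symm

/-- Proposition (case `1 ≤ k ≤ t`): with `q ≥ 2`, `1 ≤ t < n`,
`k_i := (k - iq) mod n` and `C_{k,i} := q - ⌈k/t⌉ + ⌈k_i/t⌉ + ⌈(iq - k)/n⌉`,
`min_{1 ≤ i ≤ t} {q, C_{k,i}}` equals `q - 1` if `q ∣ k` and `q` otherwise. -/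
theorem stmt_17 (q n t k : ℕ) (hq : 2 ≤ q) (ht1 : 1 ≤ t) (htn : t < n)
    (hk1 : 1 ≤ k) (hkt : k ≤ t) :
    (Finset.Icc 1 t).inf' (Finset.nonempty_Icc.mpr ht1) (fun i =>
      min (q : ℤ)
        ((q : ℤ) - ⌈(k : ℚ) / t⌉
          + ⌈(((((k : ℤ) - i * q) % n).toNat : ℚ)) / t⌉
          + ⌈((i : ℚ) * q - k) / n⌉))
      = if q ∣ k then (q : ℤ) - 1 else (q : ℤ) :=
  stmt_17_general q n t k ht1 htn hk1 hkt
end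

section
/- Let q ≥ 2 and S = ⟨n, n+1, ..., n+t⟩ with ⌈(n-1)/2⌉ ≤ t < n, t ≠ 1, and q ≤ t + 1. Then GM_q(S) = 3 + (q-1)·n - ⌈n/q⌉ + t. -/
/-!
Because `n ≤ 2t + 1`, the semigroup is `S = {0} ∪ [n, n + t] ∪ [2n, ∞)`. Every element of
`qS* + S` is at least `qn`; below `(q + 1)n` only the summand `b = 0` is possible, so there
`qS* + S` consists of the multiples of `q` in `[qn, qn + n)`, of which there are `⌈n/q⌉`.
From `(q + 1)n` on everything lies in `qS* + S`: write the excess over `(q + 1)n` as `qi + j`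
with `i ≤ (n - 1)/q ≤ t` and `j < q ≤ t + 1`. So `S \ (qS* + S)` consists of `0`, the
`t + 1` elements of `[n, n + t]` and the `(q - 1)n - ⌈n/q⌉` remaining elements of `[2n, (q + 1)n)`.
-/

open Finset

namespace AddSubmonoid

theorem mem_closure_Icc_iff {a b x : ℕ} :
    x ∈ closure (Set.Icc a b) ↔ ∃ k, k * a ≤ x ∧ x ≤ k * b := by
  constructor
  · intro hx
    induction hx using closure_induction with
    | mem y hy => exact ⟨1, by simpa using hy.1, by simpa using hy.2⟩
    | zero => exact ⟨0, by simp⟩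
    | add y z _ _ hy hz =>
      obtain ⟨k, hk⟩ := hy
      obtain ⟨l, hl⟩ := hz
      exact ⟨k + l, by rw [add_mul, add_mul]; omega⟩
  · rintro ⟨k, hk⟩
    induction k generalizing x with
    | zero => simp_all
    | succ k ih =>
      have hab : a ≤ b := Nat.le_of_mul_le_mul_left (hk.1.trans hk.2) k.succ_pos
      set g := a + min (x - (k + 1) * a) (b - a)
      have hg : g ∈ Set.Icc a b := ⟨by omega, by omega⟩
      have hkab : k * a ≤ k * b := Nat.mul_le_mul_left k hab
      have hka : (k + 1) * a = k * a + a := by ring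
      have hkb : (k + 1) * b = k * b + b := by ring
      rw [show x = (x - g) + g by omega]
      exact add_mem (ih ⟨by omega, by omega⟩) (subset_closure hg)

theorem mem_closure_Icc_add_iff {n t x : ℕ} (hn : 0 < n) (hnt : n ≤ 2 * t + 1) :
    x ∈ closure (Set.Icc n (n + t)) ↔ x = 0 ∨ x ∈ Set.Icc n (n + t) ∨ 2 * n ≤ x := by
  rw [mem_closure_Icc_iff]
  constructor
  · rintro ⟨k, hkx, hxk⟩
    rcases k with _ | _ | k
    · simp_all
    · simp_all
    · right; right
      nlinarith
  · rintro (rfl | ⟨hnx, hxn⟩ | h2n)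
    · exact ⟨0, by simp⟩
    · exact ⟨1, by simpa using hnx, by simpa using hxn⟩
    · have hk : 2 ≤ x / n := (Nat.le_div_iff_mul_le hn).mpr (by omega)
      have hkt : 2 * t ≤ x / n * t := Nat.mul_le_mul_right t hk
      have hdiv := Nat.div_add_mod x n
      have hmod := Nat.mod_lt x hn
      refine ⟨x / n, by rw [mul_comm]; omega, ?_⟩
      rw [mul_add, mul_comm]
      omega

end AddSubmonoid

theorem setOf_sum_eq_closure_Icc (n t : ℕ) :
    {x : ℕ | ∃ c : Fin (t + 1) → ℕ, x = ∑ i, c i * (n + i)} =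
      AddSubmonoid.closure (Set.Icc n (n + t)) := by
  have hrange : Set.range (fun i : Fin (t + 1) ↦ n + (i : ℕ)) = Set.Icc n (n + t) := by
    ext x
    constructor
    · rintro ⟨i, rfl⟩
      exact ⟨Nat.le_add_right n i, by have := i.isLt; simp only; omega⟩
    · rintro ⟨h1, h2⟩
      exact ⟨⟨x - n, by omega⟩, by simp only; omega⟩
  ext x
  rw [← hrange, SetLike.mem_coe, AddSubmonoid.mem_closure_range_iff_of_fintype]
  simp [smul_eq_mul]

theorem card_filter_dvd_Ico_mul_add {q : ℕ} (hq : 0 < q) (n : ℕ) :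
    (#{x ∈ Ico (q * n) (q * n + n) | q ∣ x} : ℤ) = ⌈(n : ℚ) / q⌉ := by
  have hq' : (q : ℚ) ≠ 0 := by positivity
  simp_rw [← Nat.modEq_zero_iff_dvd]
  rw [Nat.Ico_filter_modEq_card _ _ hq]
  push_cast
  rw [sub_zero, sub_zero, add_div, mul_div_cancel_left₀ _ hq', Int.ceil_natCast_add,
    Int.ceil_natCast, add_sub_cancel_left, max_eq_left (Int.ceil_nonneg (by positivity))]

/-- The set `qS* + S`, where `S* = S \ {0}`. -/
def scaledSum (q : ℕ) (S : Set ℕ) : Set ℕ :=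
  {x | ∃ a ∈ S, a ≠ 0 ∧ ∃ b ∈ S, x = q * a + b}

section ThreeIntervals

variable {n t q : ℕ} {S : Set ℕ}
  (hS : ∀ x, x ∈ S ↔ x = 0 ∨ x ∈ Set.Icc n (n + t) ∨ 2 * n ≤ x)
include hS

theorem mem_scaledSum_iff_of_lt (hnt : n ≤ 2 * t + 1) (hq : 2 ≤ q) {x : ℕ}
    (hx : x < q * n + n) : x ∈ scaledSum q S ↔ q * n ≤ x ∧ q ∣ x := by
  have hqn : 2 * n ≤ q * n := Nat.mul_le_mul_right n hq
  constructor
  · rintro ⟨a, haS, ha0, b, hbS, rfl⟩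
    have hna : n ≤ a := by rcases (hS a).mp haS with h | ⟨h, -⟩ | h <;> omega
    have hqa : q * n ≤ q * a := Nat.mul_le_mul_left q hna
    have hb : b = 0 := by rcases (hS b).mp hbS with h | ⟨h, -⟩ | h <;> omega
    subst hb
    exact ⟨hqa, Dvd.intro a rfl⟩
  · rintro ⟨hqx, a, rfl⟩
    have hna : n ≤ a := Nat.le_of_mul_le_mul_left hqx (by omega)
    have hsplit : q * a = q * n + q * (a - n) := by rw [← mul_add]; congr; omega
    have hq2 : 2 * (a - n) ≤ q * (a - n) := Nat.mul_le_mul_right _ hq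
    refine ⟨a, (hS a).mpr (Or.inr (Or.inl ⟨hna, by omega⟩)), by omega, 0, (hS 0).mpr (Or.inl rfl),
      rfl⟩

theorem mem_scaledSum_of_le (hn : 0 < n) (hnt : n ≤ 2 * t + 1) (hq : 2 ≤ q) (hqt : q ≤ t + 1)
    {x : ℕ} (hx : q * n + n ≤ x) : x ∈ scaledSum q S := by
  rcases le_or_gt (q * n + 2 * n) x with hbig | hsmall
  · exact ⟨n, (hS n).mpr (Or.inr (Or.inl ⟨le_rfl, by omega⟩)), by omega,
      x - q * n, (hS _).mpr (Or.inr (Or.inr (by omega))), by omega⟩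
  -- write `x - (q + 1) n = q i + j` with `i, j ≤ t`
  set r := x - (q * n + n)
  have hdiv := Nat.div_add_mod r q
  have hmod : r % q < q := Nat.mod_lt r (by omega)
  have hq2 : 2 * (r / q) ≤ q * (r / q) := Nat.mul_le_mul_right _ hq
  refine ⟨n + r / q, (hS _).mpr (Or.inr (Or.inl ⟨by omega, by omega⟩)), by omega,
    n + r % q, (hS _).mpr (Or.inr (Or.inl ⟨by omega, by omega⟩)), ?_⟩
  rw [mul_add]
  omega

theorem diff_scaledSum_eq (htn : t < n) (hnt : n ≤ 2 * t + 1) (hq : 2 ≤ q) (hqt : q ≤ t + 1) :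
    S \ scaledSum q S = ↑({0} ∪ Icc n (n + t) ∪
      (Ico (2 * n) (q * n + n) \ {x ∈ Ico (q * n) (q * n + n) | q ∣ x})) := by
  have hqn : 2 * n ≤ q * n := Nat.mul_le_mul_right n hq
  ext x
  simp only [Set.mem_sdiff, hS, coe_union, coe_singleton, coe_Icc, coe_sdiff, coe_Ico, coe_filter,
    Set.mem_union, Set.mem_singleton_iff, Set.mem_Icc, Set.mem_Ico, Set.mem_ofPred_eq, mem_Ico]
  rcases lt_or_ge x (q * n + n) with hx | hx
  · rw [mem_scaledSum_iff_of_lt hS hnt hq hx]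
    by_cases hdvd : q ∣ x <;> simp only [hdvd, and_true, and_false, not_false_eq_true] <;> omega
  · simp only [mem_scaledSum_of_le hS (by omega) hnt hq hqt hx, not_true_eq_false, and_false,
      false_iff]
    omega

theorem ncard_diff_scaledSum (htn : t < n) (hnt : n ≤ 2 * t + 1) (hq : 2 ≤ q)
    (hqt : q ≤ t + 1) :
    ((S \ scaledSum q S).ncard : ℤ) = t + 2 + ((q : ℤ) - 1) * n - ⌈(n : ℚ) / q⌉ := by
  have hqn : 2 * n ≤ q * n := Nat.mul_le_mul_right n hq
  have hsub : {x ∈ Ico (q * n) (q * n + n) | q ∣ x} ⊆ Ico (2 * n) (q * n + n) :=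
    (filter_subset _ _).trans (Ico_subset_Ico hqn le_rfl)
  rw [diff_scaledSum_eq hS htn hnt hq hqt, Set.ncard_coe_finset,
    card_union_of_disjoint, card_union_of_disjoint, card_sdiff_of_subset hsub]
  · push_cast [Nat.cast_sub (card_le_card hsub)]
    rw [card_filter_dvd_Ico_mul_add (by omega), card_singleton, Nat.card_Icc, Nat.card_Ico,
      show n + t + 1 - n = t + 1 by omega]
    push_cast [Nat.cast_sub (show 2 * n ≤ q * n + n by omega)]
    ring
  · simp only [disjoint_singleton_left, mem_Icc]
    omega
  · rw [disjoint_left]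
    intro x hx hx'
    simp only [mem_union, mem_singleton, mem_Icc, mem_sdiff, mem_Ico] at hx hx'
    omega

end ThreeIntervals

theorem stmt_18_general (n t q : ℕ) (hq : 2 ≤ q)
    (ht0 : ⌈((n : ℚ) - 1) / 2⌉ ≤ (t : ℤ)) (htn : t < n)
    (hqt : q ≤ t + 1)
    (S : Set ℕ)
    (hS : S = {x : ℕ | ∃ c : Fin (t + 1) → ℕ, x = ∑ i, c i * (n + i)}) :
    ((S \ {x | ∃ a ∈ S, a ≠ 0 ∧ ∃ b ∈ S, x = q * a + b}).ncard : ℤ) + 1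
      = 3 + ((q : ℤ) - 1) * n - ⌈(n : ℚ) / q⌉ + t := by
  have hnt : n ≤ 2 * t + 1 := by
    have h := Int.ceil_le.mp ht0
    rw [div_le_iff₀ two_pos] at h
    push_cast at h
    exact_mod_cast (show (n : ℚ) ≤ 2 * t + 1 by linarith)
  have hS' : ∀ x, x ∈ S ↔ x = 0 ∨ x ∈ Set.Icc n (n + t) ∨ 2 * n ≤ x := by
    intro x
    rw [hS, setOf_sum_eq_closure_Icc, SetLike.mem_coe]
    exact AddSubmonoid.mem_closure_Icc_add_iff (by omega) hnt
  rw [show {x | ∃ a ∈ S, a ≠ 0 ∧ ∃ b ∈ S, x = q * a + b} = scaledSum q S from rfl,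
    ncard_diff_scaledSum hS' htn hnt hq hqt]
  ring

/-- For `q ≥ 2` and `S = ⟨n, n+1, …, n+t⟩` with `⌈(n-1)/2⌉ ≤ t < n`, `t ≠ 1`,
and `q ≤ t + 1`: `GM_q(S) = 3 + (q-1)·n - ⌈n/q⌉ + t`. -/
theorem stmt_18 (n t q : ℕ) (hq : 2 ≤ q)
    (ht0 : ⌈((n : ℚ) - 1) / 2⌉ ≤ (t : ℤ)) (htn : t < n) (ht1 : t ≠ 1)
    (hqt : q ≤ t + 1)
    (S : Set ℕ)
    (hS : S = {x : ℕ | ∃ c : Fin (t + 1) → ℕ, x = ∑ i, c i * (n + i)}) :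
    ((S \ {x | ∃ a ∈ S, a ≠ 0 ∧ ∃ b ∈ S, x = q * a + b}).ncard : ℤ) + 1
      = 3 + ((q : ℤ) - 1) * n - ⌈(n : ℚ) / q⌉ + t :=
  stmt_18_general n t q hq ht0 htn hqt S hS
end

section
/- Let q ≥ 2 and S = ⟨n, n+1, ..., n+t⟩ with ⌈(n-1)/2⌉ ≤ t < n, t ≠ 1, and n ≤ q. Then GM_q(S) = 2 + q·n - ⌈2n/q⌉ + ⌊(t+n)/q⌋. In particular, for the ordinary semigroup t = n-1 this gives GM_q(S) = 2 + q·n - ⌈n/q⌉. -/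
/-! The sums of `k` generators fill exactly the interval `[k n, k (n + t)]`, and once
`n ≤ 2 t + 1` these intervals overlap from `k = 2` on, so `S = {0} ∪ [n, n + t] ∪ [2 n, ∞)`.
Hence `q S* + S` contains `[q n + 2 n, ∞)`, and below that bound only `q n`, `q n + [n, n + t]`
and, when `q < 2 n`, the element `q (n + 1)`. Counting what remains gives
`#(S \ (q S* + S)) = q n - [n + t < q < 2 n]`, and the closed formula is a case check
on `⌈2 n / q⌉ ∈ {1, 2}` and `⌊(t + n) / q⌋ ∈ {0, 1}`. -/

open Finset

section ConsecutiveSemigroup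

variable {n t x y : ℕ}

theorem add_mem_consecutiveSemigroup (hx : x ∈ consecutiveSemigroup n t)
    (hy : y ∈ consecutiveSemigroup n t) : x + y ∈ consecutiveSemigroup n t := by
  obtain ⟨c, rfl⟩ := hx
  obtain ⟨d, rfl⟩ := hy
  exact ⟨c + d, by simp only [Pi.add_apply, add_mul, sum_add_distrib]⟩

theorem generator_mem_consecutiveSemigroup {i : ℕ} (hi : i ≤ t) :
    n + i ∈ consecutiveSemigroup n t :=
  ⟨Pi.single ⟨i, by omega⟩ 1, by simp [Pi.single_apply, ite_mul]⟩

theorem mem_consecutiveSemigroup_of_mul_le (k : ℕ) (hlo : k * n ≤ x) (hhi : x ≤ k * (n + t)) :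
    x ∈ consecutiveSemigroup n t := by
  induction k generalizing x with
  | zero => exact ⟨0, by simp_all⟩
  | succ k ih =>
    have hx : x = (x - n - min t (x - (k + 1) * n)) + (n + min t (x - (k + 1) * n)) := by
      grind
    rw [hx]
    refine add_mem_consecutiveSemigroup (ih ?_ ?_)
      (generator_mem_consecutiveSemigroup (min_le_left _ _))
    · grind
    · grind

theorem sum_mul_le_sum_mul_add (c : Fin (t + 1) → ℕ) :
    (∑ i, c i) * n ≤ ∑ i, c i * (n + i) := by
  rw [sum_mul]
  exact sum_le_sum fun _ _ => Nat.mul_le_mul_left _ (Nat.le_add_right _ _)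

theorem sum_mul_add_le_sum_mul (c : Fin (t + 1) → ℕ) :
    ∑ i, c i * (n + i) ≤ (∑ i, c i) * (n + t) := by
  rw [sum_mul]
  exact sum_le_sum fun i _ => Nat.mul_le_mul_left _ (by have := i.isLt; omega)

theorem mem_consecutiveSemigroup_iff :
    x ∈ consecutiveSemigroup n t ↔ ∃ k, k * n ≤ x ∧ x ≤ k * (n + t) := by
  constructor
  · rintro ⟨c, rfl⟩
    exact ⟨∑ i, c i, sum_mul_le_sum_mul_add c, sum_mul_add_le_sum_mul c⟩
  · rintro ⟨k, hlo, hhi⟩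
    exact mem_consecutiveSemigroup_of_mul_le k hlo hhi

theorem mem_consecutiveSemigroup_iff_of_le (hn : 0 < n) (hnt : n ≤ 2 * t + 1) :
    x ∈ consecutiveSemigroup n t ↔ x = 0 ∨ n ≤ x ∧ x ≤ n + t ∨ 2 * n ≤ x := by
  rw [mem_consecutiveSemigroup_iff]
  constructor
  · rintro ⟨k, hlo, hhi⟩
    rcases k with _ | _ | k
    · omega
    · omega
    · have : 2 * n ≤ (k + 1 + 1) * n := Nat.mul_le_mul_right n (by omega)
      omega
  · rintro (rfl | ⟨hlo, hhi⟩ | hx)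
    · exact ⟨0, by simp⟩
    · exact ⟨1, by omega, by omega⟩
    · refine ⟨x / n, Nat.div_mul_le_self x n, ?_⟩
      have hk : 2 ≤ x / n := (Nat.le_div_iff_mul_le hn).2 (by omega)
      have := Nat.lt_div_mul_add (a := x) hn
      have : 2 * t ≤ x / n * t := Nat.mul_le_mul_right t hk
      grind

end ConsecutiveSemigroup

def shiftedSumset (q : ℕ) (S : Set ℕ) : Set ℕ :=
  {x | ∃ a ∈ S, a ≠ 0 ∧ ∃ b ∈ S, x = q * a + b}

section Count

variable {n t q : ℕ} {S : Set ℕ}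

theorem mem_shiftedSumset_iff (hn : 0 < n) (hnt : n ≤ 2 * t + 1) (hnq : n ≤ q)
    (hS : ∀ x, x ∈ S ↔ x = 0 ∨ n ≤ x ∧ x ≤ n + t ∨ 2 * n ≤ x) (x : ℕ) :
    x ∈ shiftedSumset q S ↔ x = q * n ∨ q * n + n ≤ x ∧ x ≤ q * n + n + t ∨
      x = q * n + q ∧ q < 2 * n ∨ q * n + 2 * n ≤ x := by
  constructor
  · rintro ⟨a, ha, ha0, b, hb, rfl⟩
    rw [hS] at ha hb
    obtain rfl | rfl | ha2 : a = n ∨ a = n + 1 ∨ n + 2 ≤ a := by omega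
    · omega
    · rw [mul_add_one]
      omega
    · have : q * (n + 2) ≤ q * a := Nat.mul_le_mul_left q ha2
      rw [mul_add] at this
      omega
  · have hnS : n ∈ S := (hS n).2 (by omega)
    rintro (rfl | h | ⟨rfl, hq⟩ | h)
    · exact ⟨n, hnS, by omega, 0, (hS 0).2 (by omega), by omega⟩
    · exact ⟨n, hnS, by omega, x - q * n, (hS _).2 (by omega), by omega⟩
    · exact ⟨n + 1, (hS _).2 (by omega), by omega, 0, (hS 0).2 (by omega), by ring⟩
    · exact ⟨n, hnS, by omega, x - q * n, (hS _).2 (by omega), by omega⟩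

theorem ncard_diff_shiftedSumset (hq : 2 ≤ q) (hn : 0 < n) (htn : t < n) (hnt : n ≤ 2 * t + 1)
    (hnq : n ≤ q) (hS : ∀ x, x ∈ S ↔ x = 0 ∨ n ≤ x ∧ x ≤ n + t ∨ 2 * n ≤ x) :
    (S \ shiftedSumset q S).ncard = q * n - if n + t < q ∧ q < 2 * n then 1 else 0 := by
  have hqn : 2 * n ≤ q * n := Nat.mul_le_mul_right n hq
  set B : Finset ℕ := insert (q * n) (Icc (q * n + n) (q * n + n + t)) ∪
    if n + t < q ∧ q < 2 * n then {q * n + q} else ∅ with hB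
  have hmem (x : ℕ) : x ∈ B ↔ x = q * n ∨ q * n + n ≤ x ∧ x ≤ q * n + n + t ∨
      x = q * n + q ∧ n + t < q ∧ q < 2 * n := by
    simp only [hB, mem_union, mem_insert, mem_Icc]
    split_ifs with hc <;> simp only [mem_singleton, notMem_empty, or_false] <;> omega
  have hcardB : #B = t + 2 + if n + t < q ∧ q < 2 * n then 1 else 0 := by
    rw [hB, card_union_of_disjoint, card_insert_of_notMem (by simp; omega), Nat.card_Icc]
    · split_ifs <;> simp <;> omega
    · split_ifs <;> simp; omega
  have hBsub : B ⊆ Ico (2 * n) (q * n + 2 * n) := fun x hx => by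
    rw [hmem] at hx
    rw [mem_Ico]
    omega
  have hD : S \ shiftedSumset q S =
      ↑(insert 0 (Icc n (n + t)) ∪ (Ico (2 * n) (q * n + 2 * n) \ B)) := by
    ext x
    simp only [Set.mem_sdiff, mem_shiftedSumset_iff hn hnt hnq hS, hS, coe_union, coe_insert,
      coe_Icc, coe_sdiff, coe_Ico, Set.mem_union, Set.mem_insert_iff, Set.mem_Icc, Set.mem_Ico,
      mem_coe, hmem]
    omega
  rw [hD, Set.ncard_coe_finset, card_union_of_disjoint, card_insert_of_notMem (by simp; omega),
    card_sdiff_of_subset hBsub, hcardB, Nat.card_Icc, Nat.card_Ico]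
  · split_ifs <;> omega
  · rw [disjoint_left]
    intro x hx hx'
    simp only [mem_insert, mem_Icc, mem_sdiff, mem_Ico] at hx hx'
    omega

end Count

theorem ceil_natCast_div_eq {m d : ℕ} {k : ℤ} (hd : 0 < d) (hlo : (k - 1) * d < m)
    (hhi : m ≤ k * d) : ⌈(m : ℚ) / d⌉ = k := by
  have hd' : (0 : ℚ) < d := by exact_mod_cast hd
  rw [Int.ceil_eq_iff, lt_div_iff₀ hd', div_le_iff₀ hd']
  exact ⟨by exact_mod_cast hlo, by exact_mod_cast hhi⟩

theorem cast_mul_sub_ite_add_one_eq {n t q : ℕ} (hn : 0 < n) (htn : t < n) (hnq : n ≤ q) :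
    ((q * n - if n + t < q ∧ q < 2 * n then 1 else 0 : ℕ) : ℤ) + 1
      = 2 + (q : ℤ) * n - ⌈(2 * (n : ℚ)) / q⌉ + ((t + n) / q : ℕ) := by
  have hq : 0 < q := by omega
  rcases lt_or_ge q (2 * n) with h2n | h2n
  · have hceil : ⌈(2 * (n : ℚ)) / q⌉ = 2 := by
      exact_mod_cast ceil_natCast_div_eq (m := 2 * n) (k := 2) hq (by push_cast; omega)
        (by push_cast; omega)
    rcases le_or_gt q (n + t) with hqt | hqt
    · rw [hceil, Nat.div_eq_of_lt_le (k := 1) (by omega) (by omega), if_neg (by omega)]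
      push_cast
      omega
    · have hqn : 1 ≤ q * n := Nat.mul_pos hq hn
      rw [hceil, Nat.div_eq_of_lt (by omega), if_pos (by omega)]
      push_cast [hqn]
      omega
  · have hceil : ⌈(2 * (n : ℚ)) / q⌉ = 1 := by
      exact_mod_cast ceil_natCast_div_eq (m := 2 * n) (k := 1) hq (by push_cast; omega)
        (by push_cast; omega)
    rw [hceil, Nat.div_eq_of_lt (by omega), if_neg (by omega)]
    push_cast
    omega

theorem stmt_19_general (n t q : ℕ) (hq : 2 ≤ q)
    (ht0 : ⌈((n : ℚ) - 1) / 2⌉ ≤ (t : ℤ)) (htn : t < n)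
    (hnq : n ≤ q)
    (S : Set ℕ)
    (hS : S = {x : ℕ | ∃ c : Fin (t + 1) → ℕ, x = ∑ i, c i * (n + i)}) :
    ((S \ {x | ∃ a ∈ S, a ≠ 0 ∧ ∃ b ∈ S, x = q * a + b}).ncard : ℤ) + 1
      = 2 + (q : ℤ) * n - ⌈(2 * (n : ℚ)) / q⌉ + ((t + n) / q : ℕ) ∧
    (t = n - 1 →
      ((S \ {x | ∃ a ∈ S, a ≠ 0 ∧ ∃ b ∈ S, x = q * a + b}).ncard : ℤ) + 1
        = 2 + (q : ℤ) * n - ⌈(n : ℚ) / q⌉) := by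
  have hn : 0 < n := by omega
  have hnt : n ≤ 2 * t + 1 := by
    have : ((n : ℚ) - 1) / 2 ≤ t := by exact_mod_cast Int.ceil_le.mp ht0
    have : (n : ℚ) ≤ 2 * t + 1 := by linarith
    exact_mod_cast this
  have hcard := ncard_diff_shiftedSumset hq hn htn hnt hnq (S := S)
    (by subst hS; exact fun x => mem_consecutiveSemigroup_iff_of_le hn hnt)
  unfold shiftedSumset at hcard
  rw [hcard]
  refine ⟨cast_mul_sub_ite_add_one_eq hn htn hnq, fun ht => ?_⟩
  rw [if_neg (by omega), ceil_natCast_div_eq (k := 1) (by omega) (by omega) (by omega)]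
  omega

/-- For `q ≥ 2` and `S = ⟨n, n+1, …, n+t⟩` with `⌈(n-1)/2⌉ ≤ t < n`, `t ≠ 1`,
and `n ≤ q`: `GM_q(S) = 2 + q·n - ⌈2n/q⌉ + ⌊(t+n)/q⌋`; in particular for the
ordinary semigroup `t = n - 1` this gives `GM_q(S) = 2 + q·n - ⌈n/q⌉`. -/
theorem stmt_19 (n t q : ℕ) (hq : 2 ≤ q)
    (ht0 : ⌈((n : ℚ) - 1) / 2⌉ ≤ (t : ℤ)) (htn : t < n) (ht1 : t ≠ 1)
    (hnq : n ≤ q)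
    (S : Set ℕ)
    (hS : S = {x : ℕ | ∃ c : Fin (t + 1) → ℕ, x = ∑ i, c i * (n + i)}) :
    ((S \ {x | ∃ a ∈ S, a ≠ 0 ∧ ∃ b ∈ S, x = q * a + b}).ncard : ℤ) + 1
      = 2 + (q : ℤ) * n - ⌈(2 * (n : ℚ)) / q⌉ + ((t + n) / q : ℕ) ∧
    (t = n - 1 →
      ((S \ {x | ∃ a ∈ S, a ≠ 0 ∧ ∃ b ∈ S, x = q * a + b}).ncard : ℤ) + 1
        = 2 + (q : ℤ) * n - ⌈(n : ℚ) / q⌉) :=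
  stmt_19_general n t q hq ht0 htn hnq S hS
end
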